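/- arXiv:2402.05707 — 2 statements merged into one kernel-verified Lean document; each statement's English description precedes it below -/
import Mathlib

section
/- Let V be a finite dimensional real inner product space with inner product b, and V = V₁ + ... + V_N a (not necessarily direct) sum of subspaces. Suppose each V_i carries a symmetric positive definite bilinear form b_i, and define T_i : V → V_i by b_i(T_i u, v_i) = b(u, v_i) for all v_i ∈ V_i, and T = T₁ + ... + T_N. Assume that every u ∈ V admits a decomposition u = Σ u_i with u_i ∈ V_i and Σ b_i(u_i, u_i) ≤ C₀² b(u,u). Then b(Tu, u) ≥ C₀^{-2} b(u,u) for all u ∈ V. -/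
open RealInnerProductSpace Finset

/-- Lower bound in the abstract additive Schwarz lemma: if every `u ∈ V` admits a stable
decomposition `u = Σ uᵢ`, `uᵢ ∈ Vᵢ`, with `Σ bᵢ(uᵢ,uᵢ) ≤ C₀² b(u,u)`, then the additive
Schwarz operator `T = Σ Tᵢ` satisfies `b(Tu,u) ≥ C₀⁻² b(u,u)`. -/
theorem stmt_7 {V : Type*} [NormedAddCommGroup V] [InnerProductSpace ℝ V]
    [FiniteDimensional ℝ V] {N : ℕ} (Vsub : Fin N → Submodule ℝ V)
    (hsum : (⨆ i, Vsub i : Submodule ℝ V) = ⊤)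
    (bi : Fin N → V → V → ℝ)
    (hbisym : ∀ i u v, bi i u v = bi i v u)
    (hbipos : ∀ i, ∀ u ∈ Vsub i, u ≠ 0 → 0 < bi i u u)
    (Ti : Fin N → V →ₗ[ℝ] V)
    (hTmem : ∀ i u, Ti i u ∈ Vsub i)
    (hTdef : ∀ i u, ∀ v ∈ Vsub i, bi i (Ti i u) v = ⟪u, v⟫)
    (C₀ : ℝ) (hC₀ : 0 < C₀)
    (hdecomp : ∀ u : V, ∃ w : Fin N → V, (∀ i, w i ∈ Vsub i) ∧ u = ∑ i, w i ∧
      ∑ i, bi i (w i) (w i) ≤ C₀ ^ 2 * ⟪u, u⟫) :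
    ∀ u : V, C₀⁻¹ ^ 2 * ⟪u, u⟫ ≤ ⟪(∑ i, Ti i) u, u⟫ := by
  intro u
  obtain ⟨w, hw, hu, hQ⟩ := hdecomp u
  have hb0 : ∀ i, ∀ v ∈ Vsub i, bi i 0 v = 0 := by
    intro i v hv
    have h := hTdef i 0 v hv
    simpa using h
  have hTnn : ∀ i (y : V), 0 ≤ ⟪Ti i y, y⟫ := by
    intro i y
    have h1 : bi i (Ti i y) (Ti i y) = ⟪y, Ti i y⟫ := hTdef i y _ (hTmem i y)
    by_cases h : Ti i y = 0
    · simp [h]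
    · have h2 := hbipos i _ (hTmem i y) h
      rw [h1, real_inner_comm] at h2
      linarith
  have hz : ∀ i, ∃ z, z ∈ Vsub i ∧ Ti i z = w i := by
    intro i
    set f : Vsub i →ₗ[ℝ] Vsub i := (Ti i).restrict (fun x _ => hTmem i x) with hf
    have hinj : Function.Injective f := by
      rw [← LinearMap.ker_eq_bot, LinearMap.ker_eq_bot']
      intro m hm
      have hm0 : Ti i (m : V) = 0 := congrArg Subtype.val hm
      have h1 : bi i (Ti i (m : V)) (m : V) = ⟪(m : V), (m : V)⟫ :=
        hTdef i (m : V) (m : V) m.2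
      rw [hm0, hb0 i (m : V) m.2] at h1
      have hmz : (m : V) = 0 := by
        have h2 := inner_self_eq_zero (𝕜 := ℝ) (x := (m : V))
        rw [← h1] at h2
        exact h2.mp rfl
      exact Subtype.ext hmz
    have hsurj : Function.Surjective f :=
      (LinearMap.injective_iff_surjective).mp hinj
    obtain ⟨zz, hzz⟩ := hsurj ⟨w i, hw i⟩
    exact ⟨(zz : V), zz.2, congrArg Subtype.val hzz⟩
  choose z hzmem hzw using hz
  set P : ℝ := ⟪u, u⟫ with hP
  set Q : ℝ := ∑ i, bi i (w i) (w i) with hQdef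
  set A : ℝ := ⟪(∑ i, Ti i) u, u⟫ with hA
  have hAsum : A = ∑ i, ⟪Ti i u, u⟫ := by
    rw [hA, LinearMap.sum_apply, sum_inner]
  have e1 : ∀ i, ⟪Ti i u, z i⟫ = ⟪u, w i⟫ := by
    intro i
    have h1 : bi i (Ti i (z i)) (Ti i u) = ⟪z i, Ti i u⟫ :=
      hTdef i (z i) (Ti i u) (hTmem i u)
    have h2 : bi i (Ti i u) (w i) = ⟪u, w i⟫ := hTdef i u (w i) (hw i)
    rw [hzw i] at h1
    rw [real_inner_comm, ← h1, hbisym, h2]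
  have e2 : ∀ i, ⟪Ti i (z i), u⟫ = ⟪u, w i⟫ := by
    intro i; rw [hzw i, real_inner_comm]
  have e3 : ∀ i, ⟪Ti i (z i), z i⟫ = bi i (w i) (w i) := by
    intro i
    have h1 : bi i (Ti i (z i)) (w i) = ⟪z i, w i⟫ := hTdef i (z i) (w i) (hw i)
    rw [hzw i] at h1
    rw [hzw i, real_inner_comm, h1]
  have hsumw : ∑ i, ⟪u, w i⟫ = P := by
    rw [hP, ← inner_sum, ← hu]
  have key : ∀ t : ℝ, 0 ≤ Q * (t * t) + (-(2 * P)) * t + A := by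
    intro t
    have h0 : 0 ≤ ∑ i, ⟪Ti i (u - t • z i), u - t • z i⟫ :=
      Finset.sum_nonneg fun i _ => hTnn i _
    have hexp : ∀ i, ⟪Ti i (u - t • z i), u - t • z i⟫
        = ⟪Ti i u, u⟫ - t * ⟪u, w i⟫ - t * ⟪u, w i⟫
          + t * t * bi i (w i) (w i) := by
      intro i
      simp only [map_sub, map_smul, inner_sub_left, inner_sub_right,
        real_inner_smul_left, real_inner_smul_right, e1, e2, e3]
      ring
    have hsum' : ∑ i, ⟪Ti i (u - t • z i), u - t • z i⟫
        = A - t * P - t * P + t * t * Q := by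
      rw [Finset.sum_congr rfl fun i _ => hexp i]
      rw [hAsum, hQdef]
      simp only [Finset.sum_add_distrib, Finset.sum_sub_distrib, ← Finset.mul_sum,
        hsumw]
    rw [hsum'] at h0
    linarith
  have hd := discrim_le_zero key
  rw [discrim] at hd
  have hAnn : 0 ≤ A := by
    rw [hAsum]; exact Finset.sum_nonneg fun i _ => hTnn i u
  have hPnn : 0 ≤ P := real_inner_self_nonneg
  rcases eq_or_lt_of_le hPnn with hP0 | hPpos
  · rw [← hP0]
    simpa using hAnn
  · have h1 : P ≤ C₀ ^ 2 * A := by nlinarith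
    have h2 : C₀⁻¹ ^ 2 * P ≤ C₀⁻¹ ^ 2 * (C₀ ^ 2 * A) :=
      mul_le_mul_of_nonneg_left h1 (by positivity)
    calc C₀⁻¹ ^ 2 * P ≤ C₀⁻¹ ^ 2 * (C₀ ^ 2 * A) := h2
      _ = A := by field_simp
end

section
/- In the setting of the abstract additive Schwarz framework, assume: (ii) b(u_i, u_i) ≤ ω b_i(u_i, u_i) for all u_i ∈ V_i and each i, and (iii) b(u_i, u_j) ≤ ε_{ij} b(u_i,u_i)^{1/2} b(u_j,u_j)^{1/2} for all u_i ∈ V_i, u_j ∈ V_j. Then b(Tu, u) ≤ ρ(ℰ) ω b(u,u) for all u ∈ V, where ρ(ℰ) is the spectral radius of the symmetric nonnegative matrix ℰ = (ε_{ij}). -/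
open RealInnerProductSpace Finset Matrix

lemma quadform_le_spectral {N : ℕ} [NeZero N] (ε : Matrix (Fin N) (Fin N) ℝ)
    (h : ε.IsHermitian) (x : Fin N → ℝ) :
    x ⬝ᵥ ε *ᵥ x ≤ (⨆ i, |h.eigenvalues i|) * (x ⬝ᵥ x) := by
  classical
  set ρ := ⨆ i, |h.eigenvalues i| with hρ
  have hbdd : BddAbove (Set.range fun i => |h.eigenvalues i|) :=
    Set.Finite.bddAbove (Set.finite_range _)
  have hρ_ge : ∀ i, |h.eigenvalues i| ≤ ρ := fun i => le_ciSup hbdd i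
  set U : Matrix (Fin N) (Fin N) ℝ := (h.eigenvectorUnitary : Matrix (Fin N) (Fin N) ℝ) with hU
  have hUmem : U ∈ Matrix.unitaryGroup (Fin N) ℝ := h.eigenvectorUnitary.2
  set y : Fin N → ℝ := (star U) *ᵥ x with hy
  have key1 : ∀ z : Fin N → ℝ, x ⬝ᵥ U *ᵥ z = y ⬝ᵥ z := by
    intro z
    rw [Matrix.dotProduct_mulVec, hy]
    congr 1
    rw [Matrix.star_eq_conjTranspose, Matrix.conjTranspose_eq_transpose_of_trivial,
      Matrix.mulVec_transpose]
  have key2 : y ⬝ᵥ y = x ⬝ᵥ x := by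
    have := key1 y
    rw [hy, Matrix.mulVec_mulVec, (Matrix.mem_unitaryGroup_iff).mp hUmem,
      Matrix.one_mulVec] at this
    exact this.symm
  have hdiag : ε = U * Matrix.diagonal h.eigenvalues * star U := by
    have := h.spectral_theorem
    simpa using this
  have hquad : x ⬝ᵥ ε *ᵥ x = ∑ i, h.eigenvalues i * (y i)^2 := by
    conv_lhs => rw [hdiag]
    rw [← Matrix.mulVec_mulVec, ← Matrix.mulVec_mulVec, key1, ← hy, dotProduct]
    exact Finset.sum_congr rfl fun i _ => by rw [Matrix.mulVec_diagonal]; ring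
  rw [hquad, key2.symm]
  calc ∑ i, h.eigenvalues i * (y i)^2 ≤ ∑ i, ρ * (y i)^2 := by
        apply Finset.sum_le_sum
        intro i _
        have : h.eigenvalues i ≤ ρ := (le_abs_self _).trans (hρ_ge i)
        nlinarith [sq_nonneg (y i)]
    _ = ρ * (y ⬝ᵥ y) := by rw [dotProduct, Finset.mul_sum]; congr 1; ext i; ring

/-- Upper bound in the abstract additive Schwarz lemma: under the local stability bound
`b(uᵢ,uᵢ) ≤ ω bᵢ(uᵢ,uᵢ)` and the strengthened Cauchy–Schwarz inequalities
`b(uᵢ,uⱼ) ≤ ε_{ij} b(uᵢ,uᵢ)^{1/2} b(uⱼ,uⱼ)^{1/2}`, the additive Schwarz operator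
`T = Σ Tᵢ` satisfies `b(Tu,u) ≤ ρ(ℰ) ω b(u,u)`, where `ρ(ℰ)` is the spectral radius of
the symmetric matrix `ℰ = (ε_{ij})`. -/
theorem stmt_8 {V : Type*} [NormedAddCommGroup V] [InnerProductSpace ℝ V]
    [FiniteDimensional ℝ V] {N : ℕ} (hN : 0 < N) (Vsub : Fin N → Submodule ℝ V)
    (hsum : (⨆ i, Vsub i : Submodule ℝ V) = ⊤)
    (bi : Fin N → V → V → ℝ)
    (hbisym : ∀ i u v, bi i u v = bi i v u)
    (hbipos : ∀ i, ∀ u ∈ Vsub i, u ≠ 0 → 0 < bi i u u)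
    (Ti : Fin N → V →ₗ[ℝ] V)
    (hTmem : ∀ i u, Ti i u ∈ Vsub i)
    (hTdef : ∀ i u, ∀ v ∈ Vsub i, bi i (Ti i u) v = ⟪u, v⟫)
    (ω : ℝ) (hω : 0 < ω)
    (hii : ∀ i, ∀ u ∈ Vsub i, ⟪u, u⟫ ≤ ω * bi i u u)
    (ε : Matrix (Fin N) (Fin N) ℝ) (hεsym : ε.IsHermitian) (hεnn : ∀ i j, 0 ≤ ε i j)
    (hCS : ∀ i j, ∀ u ∈ Vsub i, ∀ v ∈ Vsub j,
      ⟪u, v⟫ ≤ ε i j * Real.sqrt ⟪u, u⟫ * Real.sqrt ⟪v, v⟫) :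
    ∀ u : V, ⟪(∑ i, Ti i) u, u⟫ ≤ (⨆ i, |hεsym.eigenvalues i|) * ω * ⟪u, u⟫ := by
  haveI : NeZero N := ⟨hN.ne'⟩
  intro u
  set ρ := ⨆ i, |hεsym.eigenvalues i| with hρdef
  have hρ0 : 0 ≤ ρ := by
    have hbdd : BddAbove (Set.range fun i => |hεsym.eigenvalues i|) :=
      Set.Finite.bddAbove (Set.finite_range _)
    exact (abs_nonneg _).trans (le_ciSup hbdd ⟨0, hN⟩)
  -- T u
  set Tu : V := ∑ i, Ti i u with hTu
  have happ : (∑ i, Ti i) u = Tu := by simp [hTu]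
  rw [happ]
  set S : ℝ := ⟪Tu, u⟫ with hS
  -- x i = ‖Tᵢ u‖
  set x : Fin N → ℝ := fun i => Real.sqrt ⟪Ti i u, Ti i u⟫ with hx
  -- ⟪Tu, Tu⟫ ≤ x ⬝ᵥ ε *ᵥ x
  have h1 : ⟪Tu, Tu⟫ ≤ x ⬝ᵥ ε *ᵥ x := by
    rw [hTu, sum_inner]
    calc (∑ i, (⟪Ti i u, ∑ j, Ti j u⟫ : ℝ)) = ∑ i, ∑ j, (⟪Ti i u, Ti j u⟫ : ℝ) := by
          exact Finset.sum_congr rfl fun i _ => inner_sum _ _ _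
      _ ≤ ∑ i, ∑ j, ε i j * x i * x j := by
          apply Finset.sum_le_sum; intro i _
          apply Finset.sum_le_sum; intro j _
          exact hCS i j _ (hTmem i u) _ (hTmem j u)
      _ = x ⬝ᵥ ε *ᵥ x := by
          rw [dotProduct]
          apply Finset.sum_congr rfl
          intro i _
          rw [Matrix.mulVec, dotProduct, Finset.mul_sum]
          apply Finset.sum_congr rfl
          intro j _
          ring
  have h2 : x ⬝ᵥ ε *ᵥ x ≤ ρ * (x ⬝ᵥ x) := quadform_le_spectral ε hεsym x
  -- x ⬝ᵥ x = ∑ ⟪Tᵢu, Tᵢu⟫ ≤ ω * S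
  have h3 : x ⬝ᵥ x ≤ ω * S := by
    have hxx : x ⬝ᵥ x = ∑ i, ⟪Ti i u, Ti i u⟫ := by
      rw [dotProduct]
      apply Finset.sum_congr rfl
      intro i _
      exact Real.mul_self_sqrt real_inner_self_nonneg
    have hSsum : S = ∑ i, ⟪u, Ti i u⟫ := by
      rw [hS, real_inner_comm, hTu, inner_sum]
    rw [hxx, hSsum, Finset.mul_sum]
    apply Finset.sum_le_sum
    intro i _
    calc ⟪Ti i u, Ti i u⟫ ≤ ω * bi i (Ti i u) (Ti i u) := hii i _ (hTmem i u)
      _ = ω * ⟪u, Ti i u⟫ := by rw [hTdef i u _ (hTmem i u)]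
  -- Conclude
  by_cases hSpos : S ≤ 0
  · calc S ≤ 0 := hSpos
      _ ≤ ρ * ω * ⟪u, u⟫ :=
          mul_nonneg (mul_nonneg hρ0 hω.le) real_inner_self_nonneg
  · push_neg at hSpos
    have hTT : ⟪Tu, Tu⟫ ≤ ρ * (ω * S) := h1.trans (h2.trans (by nlinarith))
    have hCS2 : S * S ≤ ⟪Tu, Tu⟫ * ⟪u, u⟫ := real_inner_mul_inner_self_le Tu u
    have huu : (0:ℝ) ≤ ⟪u, u⟫ := real_inner_self_nonneg
    nlinarith
end
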